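/- Let H be a hypergraph and k a number, and let H'_i denote the hypergraph of k-pseudo-cores of level i (H'_0 = H). Then the sequence (H'_0, H'_1, …, H'_{d(H)}) is a matryoshka sequence for H and k: H'_0 = H; d(H'_i) ≤ d(H) − i; k-cores(H'_i) ⊆ H'_{i+1}; and every hitting set of H of size at most k is a hitting set of every H'_i. -/

import Mathlib

/-- A sunflower with core `C`. -/
def IsSunflower {V : Type*} [DecidableEq V] (S : Finset (Finset V)) (C : Finset V) : Prop :=
  (∀ p ∈ S, C ⊂ p) ∧ ∀ p ∈ S, ∀ q ∈ S, p ≠ q → p ∩ q = C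

/-- The `k`-cores of a hypergraph: cores of sunflowers with more than `k` petals. -/
def KCores {V : Type*} [DecidableEq V] (k : ℕ) (E : Set (Finset V)) : Set (Finset V) :=
  {C | ∃ S : Finset (Finset V), ↑S ⊆ E ∧ k < S.card ∧ IsSunflower S C}

/-- A `T^k_L`-pseudo-sunflower for the hypergraph `E` with pseudo-core `C`.
The leaves of the complete `(k+1)`-ary tree `T^k_L` of depth `L` are encoded as
the sequences `Fin L → Fin (k+1)` of child choices along the root-to-leaf path;
the first depth at which the paths to two leaves `l ≠ m` diverge is `z + 1`
where `z` is the least index with `l z ≠ m z`. -/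
def IsPseudoSunflower {V : Type*} [DecidableEq V] (E : Set (Finset V)) (k L : ℕ)
    (C : Finset V) (S : (Fin L → Fin (k + 1)) → ℕ → Finset V) : Prop :=
  (∀ l, S l 0 = C) ∧
  (∀ l, (Finset.range (L + 1)).biUnion (S l) ∈ E) ∧
  (∀ l, ∀ i j : ℕ, i < j → j ≤ L → S l i ∩ S l j = ∅) ∧
  (∀ l, ∀ i : ℕ, 1 ≤ i → i ≤ L → (S l i).Nonempty) ∧
  (∀ l m : Fin L → Fin (k + 1), ∀ z : Fin L,
    (∀ z' : Fin L, z' < z → l z' = m z') → l z ≠ m z →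
      S l (z.val + 1) ∩ S m (z.val + 1) = ∅)

/-- The `k`-pseudo-cores of level `L` of the hypergraph `E`. -/
def PseudoCores {V : Type*} [DecidableEq V] (E : Set (Finset V)) (k L : ℕ) :
    Set (Finset V) :=
  {C | ∃ S, IsPseudoSunflower E k L C S}

/-- `X` is a hitting set of the hypergraph with edge set `E`. -/
def HitsAll {V : Type*} [DecidableEq V] (X : Finset V) (E : Set (Finset V)) : Prop :=
  ∀ e ∈ E, (e ∩ X).Nonempty

/-!
A pseudo-sunflower of level `L` has, along every leaf, `L` nonempty rows disjoint from the core
and from each other inside an edge of size at most `d`, so its core has at most `d - L` elements.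
A sunflower with `k + 1` petals whose petals are pseudo-cores of level `L` becomes a
pseudo-sunflower of level `L + 1` by grafting the `k + 1` witnessing trees below a new root, the
new row `1` being petal minus core. For a set `X` of at most `k` vertices: leaves below different
children of a node at depth `z` have disjoint rows `z + 1`, so below one of the `k + 1` children
all these rows miss `X`. Descending greedily gives a leaf whose rows of index `≥ 1` all miss `X`;
as `X` meets that leaf's edge, it meets the core.
-/

theorem Finset.biUnion_range_add_one' {α : Type*} [DecidableEq α] (f : ℕ → Finset α) (n : ℕ) :
    (Finset.range (n + 1)).biUnion f = f 0 ∪ (Finset.range n).biUnion (fun i => f (i + 1)) := by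
  rw [Finset.range_add_one', Finset.biUnion_insert, Finset.map_eq_image, Finset.image_biUnion]
  rfl

theorem Fintype.card_le_card_of_pairwise_disjoint_of_forall_not_disjoint {ι α : Type*}
    [Fintype ι] [DecidableEq α]
    {f : ι → Finset α} (hf : Pairwise (Function.onFun Disjoint f)) {X : Finset α}
    (hX : ∀ i, ¬ Disjoint (f i) X) : Fintype.card ι ≤ X.card := by
  choose x hxf hxX using fun i => Finset.not_disjoint_iff.1 (hX i)
  have hx : Function.Injective x := fun i j hij => by
    by_contra hne
    exact Finset.disjoint_left.1 (hf hne) (hxf i) (hij ▸ hxf j)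
  simpa only [Finset.card_univ] using
    Finset.card_le_card_of_injOn (s := Finset.univ) x (fun i _ => hxX i) hx.injOn

section

variable {V : Type*} [DecidableEq V]

theorem IsSunflower.exists_petals {S : Finset (Finset V)} {C : Finset V} (hS : IsSunflower S C)
    {k : ℕ} (hk : k < S.card) :
    ∃ p : Fin (k + 1) → Finset V,
      (∀ a, p a ∈ S) ∧ (∀ a, C ⊂ p a) ∧ ∀ a b, a ≠ b → p a ∩ p b = C := by
  let e : Fin (k + 1) ↪ S := (Fin.castLEEmb hk).trans S.equivFin.symm.toEmbedding
  refine ⟨fun a => e a, fun a => (e a).2, fun a => hS.1 _ (e a).2, fun a b hab => ?_⟩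
  exact hS.2 _ (e a).2 _ (e b).2 fun h => hab (e.injective (Subtype.ext h))

theorem pseudoCores_zero (E : Set (Finset V)) (k : ℕ) : PseudoCores E k 0 = E := by
  ext C
  constructor
  · rintro ⟨S, hS0, hSE, -⟩
    simpa [hS0] using hSE Fin.elim0
  · intro hC
    refine ⟨fun _ n => if n = 0 then C else ∅, fun _ => rfl, fun _ => by simpa using hC,
      fun _ _ _ _ _ => by omega, fun _ _ _ _ => by omega, fun _ _ z => z.elim0⟩

namespace IsPseudoSunflower

variable {E : Set (Finset V)} {k L : ℕ} {C : Finset V} {S : (Fin L → Fin (k + 1)) → ℕ → Finset V}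

theorem disjoint (hS : IsPseudoSunflower E k L C S) (l : Fin L → Fin (k + 1)) {i j : ℕ}
    (hij : i < j) (hj : j ≤ L) : Disjoint (S l i) (S l j) :=
  Finset.disjoint_iff_inter_eq_empty.2 (hS.2.2.1 l i j hij hj)

theorem card_add_le (hS : IsPseudoSunflower E k L C S) (l : Fin L → Fin (k + 1)) :
    C.card + L ≤ ((Finset.range (L + 1)).biUnion (S l)).card := by
  have hdisj : (↑(Finset.range (L + 1)) : Set ℕ).PairwiseDisjoint (S l) := by
    intro i hi j hj hij
    simp only [Finset.coe_range, Set.mem_Iio] at hi hj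
    rcases lt_or_gt_of_ne hij with h | h
    · exact hS.disjoint l h (by omega)
    · exact (hS.disjoint l h (by omega)).symm
  have hrow : L ≤ ∑ j ∈ Finset.range L, (S l (j + 1)).card := by
    calc L = ∑ _j ∈ Finset.range L, 1 := by simp
      _ ≤ _ := Finset.sum_le_sum fun j hj => Finset.card_pos.2
        (hS.2.2.2.1 l (j + 1) (by omega) (by have := Finset.mem_range.1 hj; omega))
  rw [Finset.card_biUnion hdisj, Finset.sum_range_succ', hS.1 l]
  omega

theorem card_le_sub (hS : IsPseudoSunflower E k L C S) {d : ℕ} (hd : ∀ e ∈ E, e.card ≤ d) :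
    C.card ≤ d - L := by
  have := (hS.card_add_le 0).trans (hd _ (hS.2.1 0))
  omega

theorem exists_child_disjoint (hS : IsPseudoSunflower E k L C S) {X : Finset V}
    (hX : X.card ≤ k) (l₀ : Fin L → Fin (k + 1)) (z : Fin L) :
    ∃ c, ∀ m, (∀ z' < z, m z' = l₀ z') → m z = c → Disjoint (S m (z + 1)) X := by
  by_contra! h
  choose m hm_agree hm_child hm_meet using h
  have hdisj : Pairwise (Function.onFun Disjoint fun c => S (m c) (z + 1)) := fun a b hab =>
    Finset.disjoint_iff_inter_eq_empty.2 <| hS.2.2.2.2 (m a) (m b) z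
      (fun z' hz' => (hm_agree a z' hz').trans (hm_agree b z' hz').symm)
      (by rwa [hm_child, hm_child])
  have := Fintype.card_le_card_of_pairwise_disjoint_of_forall_not_disjoint hdisj hm_meet
  simp only [Fintype.card_fin] at this
  omega

theorem exists_leaf_disjoint (hS : IsPseudoSunflower E k L C S) {X : Finset V}
    (hX : X.card ≤ k) : ∃ l, ∀ j, 1 ≤ j → j ≤ L → Disjoint (S l j) X := by
  suffices h : ∀ n ≤ L, ∃ l₀ : Fin L → Fin (k + 1), ∀ m, (∀ z : Fin L, z.val < n → m z = l₀ z) →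
      ∀ j, 1 ≤ j → j ≤ n → Disjoint (S m j) X by
    obtain ⟨l, hl⟩ := h L le_rfl
    exact ⟨l, hl l fun _ _ => rfl⟩
  intro n
  induction n with
  | zero => exact fun _ => ⟨0, fun _ _ _ _ _ => by omega⟩
  | succ n ih =>
    intro hn
    obtain ⟨l₀, hl₀⟩ := ih (by omega)
    obtain ⟨c, hc⟩ := hS.exists_child_disjoint hX l₀ ⟨n, hn⟩
    refine ⟨Function.update l₀ ⟨n, hn⟩ c, fun m hm j hj hjn => ?_⟩
    have hagree : ∀ z : Fin L, z.val < n → m z = l₀ z := fun z hz => by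
      rw [hm z (by omega), Function.update_of_ne (Fin.ne_of_lt hz)]
    rcases (by omega : j ≤ n ∨ j = n + 1) with hj' | rfl
    · exact hl₀ m hagree j hj hj'
    · exact hc m hagree (by simpa using hm ⟨n, hn⟩ (by simp))

theorem inter_nonempty (hS : IsPseudoSunflower E k L C S) {X : Finset V} (hX : X.card ≤ k)
    (hE : HitsAll X E) : (C ∩ X).Nonempty := by
  obtain ⟨l, hl⟩ := hS.exists_leaf_disjoint hX
  obtain ⟨x, hx⟩ := hE _ (hS.2.1 l)
  simp only [Finset.mem_inter, Finset.mem_biUnion, Finset.mem_range] at hx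
  obtain ⟨⟨j, hj, hxj⟩, hxX⟩ := hx
  rcases Nat.eq_zero_or_pos j with rfl | hj0
  · exact ⟨x, Finset.mem_inter.2 ⟨hS.1 l ▸ hxj, hxX⟩⟩
  · exact absurd hxX (Finset.disjoint_left.1 (hl j hj0 (by omega)) hxj)

end IsPseudoSunflower

section Graft

variable {k L : ℕ}

/- The leaf `l` of the grafted tree lies below the root's child `l 0`; its row `1` is the part of
the petal `p (l 0)` outside the core, and its deeper rows are those of the leaf `Fin.tail l` of
the pseudo-sunflower `W (l 0)`. -/
def graft (C : Finset V) (p : Fin (k + 1) → Finset V)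
    (W : Fin (k + 1) → (Fin L → Fin (k + 1)) → ℕ → Finset V) :
    (Fin (L + 1) → Fin (k + 1)) → ℕ → Finset V
  | _, 0 => C
  | l, 1 => p (l 0) \ C
  | l, n + 2 => W (l 0) (Fin.tail l) (n + 1)

variable {E : Set (Finset V)} {C : Finset V} {p : Fin (k + 1) → Finset V}
  {W : Fin (k + 1) → (Fin L → Fin (k + 1)) → ℕ → Finset V}

theorem biUnion_graft (hp : ∀ a, C ⊆ p a) (hW0 : ∀ a l, W a l 0 = p a)
    (l : Fin (L + 1) → Fin (k + 1)) :
    (Finset.range (L + 2)).biUnion (graft C p W l) =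
      (Finset.range (L + 1)).biUnion (W (l 0) (Fin.tail l)) := by
  simp only [Finset.biUnion_range_add_one', ← Finset.union_assoc, hW0]
  congr 1
  exact Finset.union_sdiff_of_subset (hp _)

theorem disjoint_graft (hp : ∀ a, C ⊆ p a) (hW : ∀ a, IsPseudoSunflower E k L (p a) (W a))
    (l : Fin (L + 1) → Fin (k + 1)) {i j : ℕ} (hij : i < j) (hj : j ≤ L + 1) :
    Disjoint (graft C p W l i) (graft C p W l j) := by
  have hrow : ∀ n, 0 < n → n ≤ L → Disjoint (p (l 0)) (W (l 0) (Fin.tail l) n) :=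
    fun n hn hnL => by
    simpa only [(hW (l 0)).1] using (hW (l 0)).disjoint (Fin.tail l) hn hnL
  match i, j, hij with
  | 0, 1, _ => exact Finset.disjoint_sdiff
  | 0, n + 2, _ => exact (hrow (n + 1) (by omega) (by omega)).mono_left (hp _)
  | 1, n + 2, _ => exact (hrow (n + 1) (by omega) (by omega)).mono_left Finset.sdiff_subset
  | m + 2, n + 2, _ => exact (hW (l 0)).disjoint _ (by omega) (by omega)

theorem graft_nonempty (hp : ∀ a, C ⊂ p a) (hW : ∀ a, IsPseudoSunflower E k L (p a) (W a))
    (l : Fin (L + 1) → Fin (k + 1)) {i : ℕ} (hi : 1 ≤ i) (hiL : i ≤ L + 1) :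
    (graft C p W l i).Nonempty := by
  match i, hi with
  | 1, _ => exact Finset.sdiff_nonempty.2 (hp _).not_subset
  | n + 2, _ => exact (hW (l 0)).2.2.2.1 _ (n + 1) (by omega) (by omega)

theorem graft_inter_eq_empty_of_diverge (hpp : ∀ a b, a ≠ b → p a ∩ p b = C)
    (hW : ∀ a, IsPseudoSunflower E k L (p a) (W a)) (l m : Fin (L + 1) → Fin (k + 1))
    (z : Fin (L + 1)) (hlm : ∀ z' < z, l z' = m z') (hz : l z ≠ m z) :
    graft C p W l (z + 1) ∩ graft C p W m (z + 1) = ∅ := by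
  cases z using Fin.cases with
  | zero =>
    show (p (l 0) \ C) ∩ (p (m 0) \ C) = ∅
    ext x
    simp only [Finset.mem_inter, Finset.mem_sdiff, Finset.notMem_empty, iff_false]
    rintro ⟨⟨hxl, hxC⟩, hxm, -⟩
    exact hxC (hpp _ _ hz ▸ Finset.mem_inter.2 ⟨hxl, hxm⟩)
  | succ z =>
    show W (l 0) (Fin.tail l) (z + 1) ∩ W (m 0) (Fin.tail m) (z + 1) = ∅
    rw [← hlm 0 (Fin.succ_pos z)]
    exact (hW (l 0)).2.2.2.2 _ _ z (fun z' hz' => hlm z'.succ (Fin.succ_lt_succ_iff.2 hz')) hz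

theorem isPseudoSunflower_graft (hp : ∀ a, C ⊂ p a) (hpp : ∀ a b, a ≠ b → p a ∩ p b = C)
    (hW : ∀ a, IsPseudoSunflower E k L (p a) (W a)) :
    IsPseudoSunflower E k (L + 1) C (graft C p W) := by
  refine ⟨fun _ => rfl, fun l => ?_, fun l i j hij hj => ?_, fun l i => graft_nonempty hp hW l,
    graft_inter_eq_empty_of_diverge hpp hW⟩
  · rw [biUnion_graft (fun a => (hp a).1) (fun a => (hW a).1)]
    exact (hW _).2.1 _
  · exact Finset.disjoint_iff_inter_eq_empty.1 (disjoint_graft (fun a => (hp a).1) hW l hij hj)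

end Graft

theorem kCores_pseudoCores_subset (E : Set (Finset V)) (k L : ℕ) :
    KCores k (PseudoCores E k L) ⊆ PseudoCores E k (L + 1) := by
  rintro C ⟨F, hFE, hk, hF⟩
  obtain ⟨p, hpF, hp, hpp⟩ := hF.exists_petals hk
  choose W hW using fun a => hFE (hpF a)
  exact ⟨_, isPseudoSunflower_graft hp hpp hW⟩

end

/-- **Pseudo-cores form a matryoshka sequence.** With `H'_i = PseudoCores E k i`,
we have: `H'_0 = H`; `d(H'_i) ≤ d(H) - i`; `k-cores(H'_i) ⊆ H'_{i+1}`; and every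
hitting set of `H` of size at most `k` is a hitting set of every `H'_i`. -/
theorem pseudoCores_matryoshka {V : Type*} [DecidableEq V]
    (E : Set (Finset V)) (k d : ℕ) (hd : ∀ e ∈ E, e.card ≤ d) :
    PseudoCores E k 0 = E ∧
    (∀ i ≤ d, ∀ e ∈ PseudoCores E k i, e.card ≤ d - i) ∧
    (∀ i < d, KCores k (PseudoCores E k i) ⊆ PseudoCores E k (i + 1)) ∧
    (∀ i ≤ d, ∀ X : Finset V, X.card ≤ k → HitsAll X E →
      HitsAll X (PseudoCores E k i)) := by
  refine ⟨pseudoCores_zero E k, ?_, ?_, ?_⟩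
  · rintro i - e ⟨S, hS⟩
    exact hS.card_le_sub hd
  · exact fun i _ => kCores_pseudoCores_subset E k i
  · exact fun i _ X hX hE C ⟨S, hS⟩ => hS.inter_nonempty hX hE
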